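/- A BPVE survives (i.e. p_e < 1) if and only if there exist q : ℕ → [0,1] and n₀ ∈ ℕ such that q(n₀) < 1 and Φ_n(q(n+1)) ≤ q(n) for all n ≥ n₀. -/

import Mathlib

open Filter ENNReal

/-- Probability generating function `Φ_n(z) := ∑_i ρ_n(i) z^i` of the `n`-th offspring
distribution of a branching process in varying environment (BPVE). -/
noncomputable def Phi (ρ : ℕ → ℕ → ℝ) (n : ℕ) (z : ℝ) : ℝ :=
  ∑' i : ℕ, ρ n i * z ^ i

/-- The iterated generating functions `H_0(z) := z`, `H_{n+1} := H_n ∘ Φ_n`;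
`H_n(0)` is the probability of extinction by generation `n`, and the extinction
probability is `p_e = lim_n H_n(0)`. -/
noncomputable def Hseq (ρ : ℕ → ℕ → ℝ) : ℕ → ℝ → ℝ
  | 0 => fun z => z
  | n + 1 => fun z => Hseq ρ n (Phi ρ n z)

/-- First moment `m_n := ∑_i i ρ_n(i) ∈ [0,∞]` of the `n`-th offspring distribution. -/
noncomputable def mom (ρ : ℕ → ℕ → ℝ) (n : ℕ) : ℝ≥0∞ :=
  ∑' i : ℕ, (i : ℝ≥0∞) * ENNReal.ofReal (ρ n i)

/-- Second moment `m_n⁽²⁾ := ∑_i i² ρ_n(i) ∈ [0,∞]` of the `n`-th offspring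
distribution. -/
noncomputable def mom2 (ρ : ℕ → ℕ → ℝ) (n : ℕ) : ℝ≥0∞ :=
  ∑' i : ℕ, (i : ℝ≥0∞) ^ 2 * ENNReal.ofReal (ρ n i)

/-!
Write `Φ_{n,k} = Φ_n ∘ ⋯ ∘ Φ_{n+k-1}`, so that `H_k = Φ_{0,k}`. The increasing limits
`q n = lim_k Φ_{n,k}(0)` (extinction probabilities of the process started at generation `n`)
satisfy `Φ_n(q(n+1)) = q(n)` by continuity of `Φ_n`, and `q 0 = p_e`. Conversely, if `q` is
sub-invariant from `n₀` on, monotonicity gives `Φ_{n,k}(0) ≤ q n` for `n ≥ n₀`, hence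
`H_{n₀+k}(0) ≤ H_{n₀}(q n₀)`; and `H_{n₀}` maps `[0,1)` into itself since every `ρ_n(0) < 1`.
-/

open Set Topology

lemma summable_mul_pow_of_hasSum_one {p : ℕ → ℝ} (h0 : ∀ i, 0 ≤ p i) (h1 : HasSum p 1)
    {z : ℝ} (hz : z ∈ Icc (0 : ℝ) 1) : Summable fun i => p i * z ^ i :=
  Summable.of_nonneg_of_le (fun i => mul_nonneg (h0 i) (pow_nonneg hz.1 i))
    (fun i => mul_le_of_le_one_right (h0 i) (pow_le_one₀ hz.1 hz.2)) h1.summable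

lemma exists_ne_zero_pos_of_hasSum_one {p : ℕ → ℝ} (h0 : ∀ i, 0 ≤ p i) (h1 : HasSum p 1)
    (hp0 : p 0 < 1) : ∃ j ≠ 0, 0 < p j := by
  by_contra! h
  have hsingle : HasSum p (p 0) := hasSum_single 0 fun j hj => le_antisymm (h j hj) (h0 j)
  exact hp0.ne (hsingle.unique h1)

section GeneratingFunction

variable {ρ : ℕ → ℕ → ℝ} {n : ℕ}

lemma Phi_one (h1 : HasSum (ρ n) 1) : Phi ρ n 1 = 1 := by
  simpa only [Phi, one_pow, mul_one] using h1.tsum_eq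

lemma Phi_nonneg (h0 : ∀ i, 0 ≤ ρ n i) {z : ℝ} (hz : 0 ≤ z) : 0 ≤ Phi ρ n z :=
  tsum_nonneg fun i => mul_nonneg (h0 i) (pow_nonneg hz i)

lemma monotoneOn_Phi (h0 : ∀ i, 0 ≤ ρ n i) (h1 : HasSum (ρ n) 1) :
    MonotoneOn (Phi ρ n) (Icc 0 1) := fun _ hx _ hy hxy =>
  Summable.tsum_le_tsum
    (fun i => mul_le_mul_of_nonneg_left (pow_le_pow_left₀ hx.1 hxy i) (h0 i))
    (summable_mul_pow_of_hasSum_one h0 h1 hx) (summable_mul_pow_of_hasSum_one h0 h1 hy)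

lemma mapsTo_Phi_Icc (h0 : ∀ i, 0 ≤ ρ n i) (h1 : HasSum (ρ n) 1) :
    MapsTo (Phi ρ n) (Icc 0 1) (Icc 0 1) := fun _ hz =>
  ⟨Phi_nonneg h0 hz.1,
    Phi_one h1 ▸ monotoneOn_Phi h0 h1 hz (right_mem_Icc.2 zero_le_one) hz.2⟩

lemma Phi_lt_one (h0 : ∀ i, 0 ≤ ρ n i) (h1 : HasSum (ρ n) 1) (hρ0 : ρ n 0 < 1)
    {z : ℝ} (hz : z ∈ Ico (0 : ℝ) 1) : Phi ρ n z < 1 := by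
  obtain ⟨j, hj, hρj⟩ := exists_ne_zero_pos_of_hasSum_one h0 h1 hρ0
  rw [← h1.tsum_eq]
  refine Summable.tsum_lt_tsum (i := j)
    (fun i => mul_le_of_le_one_right (h0 i) (pow_le_one₀ hz.1 hz.2.le))
    (mul_lt_of_lt_one_right hρj (pow_lt_one₀ hz.1 hz.2 hj))
    (summable_mul_pow_of_hasSum_one h0 h1 (Ico_subset_Icc_self hz)) h1.summable

lemma mapsTo_Phi_Ico (h0 : ∀ i, 0 ≤ ρ n i) (h1 : HasSum (ρ n) 1) (hρ0 : ρ n 0 < 1) :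
    MapsTo (Phi ρ n) (Ico 0 1) (Ico 0 1) := fun _ hz =>
  ⟨Phi_nonneg h0 hz.1, Phi_lt_one h0 h1 hρ0 hz⟩

lemma continuousOn_Phi (h0 : ∀ i, 0 ≤ ρ n i) (h1 : HasSum (ρ n) 1) :
    ContinuousOn (Phi ρ n) (Icc 0 1) := by
  refine continuousOn_tsum (fun i => continuousOn_const.mul (continuousOn_pow i)) h1.summable
    fun i z hz => ?_
  rw [Real.norm_eq_abs, abs_of_nonneg (mul_nonneg (h0 i) (pow_nonneg hz.1 i))]
  exact mul_le_of_le_one_right (h0 i) (pow_le_one₀ hz.1 hz.2)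

end GeneratingFunction

/-- `compFrom f n k = f n ∘ f (n + 1) ∘ ⋯ ∘ f (n + k - 1)`. For `f = Phi ρ` this is the
generating function of generation `n + k` of the process started by one individual at
generation `n`. -/
def compFrom {α : Type*} (f : ℕ → α → α) : ℕ → ℕ → α → α
  | _, 0 => id
  | n, k + 1 => f n ∘ compFrom f (n + 1) k

section Composition

variable {α : Type*} {f : ℕ → α → α}

@[simp] lemma compFrom_zero (n : ℕ) : compFrom f n 0 = id := rfl

lemma compFrom_succ (n k : ℕ) : compFrom f n (k + 1) = f n ∘ compFrom f (n + 1) k := rfl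

lemma compFrom_add (n a b : ℕ) :
    compFrom f n (a + b) = compFrom f n a ∘ compFrom f (n + a) b := by
  induction a generalizing n with
  | zero => simp
  | succ a ih =>
    rw [Nat.add_right_comm, compFrom_succ, ih, compFrom_succ, Nat.add_right_comm n 1 a]
    rfl

lemma compFrom_succ' (n k : ℕ) : compFrom f n (k + 1) = compFrom f n k ∘ f (n + k) :=
  compFrom_add n k 1

lemma Hseq_eq_compFrom (ρ : ℕ → ℕ → ℝ) (k : ℕ) : Hseq ρ k = compFrom (Phi ρ) 0 k := by
  induction k with
  | zero => rfl
  | succ k ih =>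
    rw [compFrom_succ', ← ih, Nat.zero_add]
    rfl

lemma mapsTo_compFrom {s : Set α} (hf : ∀ n, MapsTo (f n) s s) (n k : ℕ) :
    MapsTo (compFrom f n k) s s := by
  induction k generalizing n with
  | zero => exact mapsTo_id s
  | succ k ih => exact (hf n).comp (ih (n + 1))

variable [Preorder α] {s : Set α}

lemma monotoneOn_compFrom (hf : ∀ n, MapsTo (f n) s s) (hmono : ∀ n, MonotoneOn (f n) s)
    (n k : ℕ) : MonotoneOn (compFrom f n k) s := by
  induction k generalizing n with
  | zero => exact monotoneOn_id
  | succ k ih => exact (hmono n).comp (ih (n + 1)) (mapsTo_compFrom hf (n + 1) k)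

lemma monotone_compFrom_of_isLeast {a : α} (ha : IsLeast s a) (hf : ∀ n, MapsTo (f n) s s)
    (hmono : ∀ n, MonotoneOn (f n) s) (n : ℕ) : Monotone fun k => compFrom f n k a := by
  refine monotone_nat_of_le_succ fun k => ?_
  induction k generalizing n with
  | zero => exact ha.2 (hf n ha.1)
  | succ k ih =>
    exact hmono n (mapsTo_compFrom hf _ _ ha.1) (mapsTo_compFrom hf _ _ ha.1) (ih (n + 1))

lemma compFrom_le_of_subinvariant {a : α} (ha : IsLeast s a) (hf : ∀ n, MapsTo (f n) s s)
    (hmono : ∀ n, MonotoneOn (f n) s) {q : ℕ → α} (hq : ∀ n, q n ∈ s) {n₀ : ℕ}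
    (hsub : ∀ n ≥ n₀, f n (q (n + 1)) ≤ q n) (k : ℕ) {n : ℕ} (hn : n₀ ≤ n) :
    compFrom f n k a ≤ q n := by
  induction k generalizing n with
  | zero => exact ha.2 (hq n)
  | succ k ih =>
    calc compFrom f n (k + 1) a = f n (compFrom f (n + 1) k a) := rfl
      _ ≤ f n (q (n + 1)) :=
        hmono n (mapsTo_compFrom hf _ _ ha.1) (hq _) (ih (hn.trans n.le_succ))
      _ ≤ q n := hsub n hn

lemma compFrom_le_compFrom_of_subinvariant {a : α} (ha : IsLeast s a)
    (hf : ∀ n, MapsTo (f n) s s) (hmono : ∀ n, MonotoneOn (f n) s) {q : ℕ → α}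
    (hq : ∀ n, q n ∈ s) {n₀ : ℕ} (hsub : ∀ n ≥ n₀, f n (q (n + 1)) ≤ q n) {k : ℕ}
    (hk : n₀ ≤ k) : compFrom f 0 k a ≤ compFrom f 0 n₀ (q n₀) := by
  obtain ⟨m, rfl⟩ := Nat.exists_eq_add_of_le hk
  rw [compFrom_add, Nat.zero_add]
  exact monotoneOn_compFrom hf hmono 0 n₀ (mapsTo_compFrom hf _ _ ha.1) (hq n₀)
    (compFrom_le_of_subinvariant ha hf hmono hq hsub m le_rfl)

end Composition

section UnitInterval

variable {f : ℕ → ℝ → ℝ}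

lemma tendsto_compFrom_zero (hf : ∀ n, MapsTo (f n) (Icc 0 1) (Icc 0 1))
    (hmono : ∀ n, MonotoneOn (f n) (Icc 0 1)) (n : ℕ) :
    Tendsto (fun k => compFrom f n k 0) atTop (𝓝 (⨆ k, compFrom f n k 0)) :=
  tendsto_atTop_ciSup (monotone_compFrom_of_isLeast (isLeast_Icc zero_le_one) hf hmono n)
    ⟨1, forall_mem_range.2 fun k => (mapsTo_compFrom hf n k (left_mem_Icc.2 zero_le_one)).2⟩

lemma iSup_compFrom_zero_mem_Icc (hf : ∀ n, MapsTo (f n) (Icc 0 1) (Icc 0 1))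
    (hmono : ∀ n, MonotoneOn (f n) (Icc 0 1)) (n : ℕ) :
    ⨆ k, compFrom f n k 0 ∈ Icc (0 : ℝ) 1 :=
  isClosed_Icc.mem_of_tendsto (tendsto_compFrom_zero hf hmono n)
    (Eventually.of_forall fun k => mapsTo_compFrom hf n k (left_mem_Icc.2 zero_le_one))

lemma apply_iSup_compFrom_zero (hf : ∀ n, MapsTo (f n) (Icc 0 1) (Icc 0 1))
    (hmono : ∀ n, MonotoneOn (f n) (Icc 0 1)) (hcont : ∀ n, ContinuousOn (f n) (Icc 0 1))
    (n : ℕ) : f n (⨆ k, compFrom f (n + 1) k 0) = ⨆ k, compFrom f n k 0 := by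
  have hlim : Tendsto (fun k => compFrom f (n + 1) k 0) atTop
      (𝓝[Icc 0 1] (⨆ k, compFrom f (n + 1) k 0)) :=
    tendsto_nhdsWithin_iff.2 ⟨tendsto_compFrom_zero hf hmono (n + 1),
      Eventually.of_forall fun k => mapsTo_compFrom hf _ k (left_mem_Icc.2 zero_le_one)⟩
  exact tendsto_nhds_unique
    (((hcont n).continuousWithinAt (iSup_compFrom_zero_mem_Icc hf hmono _)).tendsto.comp hlim)
    ((tendsto_compFrom_zero hf hmono n).comp (tendsto_add_atTop_nat 1))

end UnitInterval

/-- a BPVE survives (`p_e < 1`) iff there exist `q : ℕ → [0,1]` and `n₀`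
with `q(n₀) < 1` and `Φ_n(q(n+1)) ≤ q(n)` for all `n ≥ n₀`. -/
theorem bpve_survival_iff_subinvariant (ρ : ℕ → ℕ → ℝ)
    (hρ0 : ∀ n i, 0 ≤ ρ n i) (hρ1 : ∀ n, HasSum (ρ n) 1)
    (hρlt : ∀ n, ρ n 0 < 1)
    (pe : ℝ) (hpe : Tendsto (fun n => Hseq ρ n 0) atTop (nhds pe)) :
    pe < 1 ↔
      ∃ q : ℕ → ℝ, ∃ n₀ : ℕ, (∀ n, q n ∈ Set.Icc (0 : ℝ) 1) ∧ q n₀ < 1 ∧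
        ∀ n ≥ n₀, Phi ρ n (q (n + 1)) ≤ q n := by
  have hmaps n := mapsTo_Phi_Icc (hρ0 n) (hρ1 n)
  have hmono n := monotoneOn_Phi (hρ0 n) (hρ1 n)
  have hH : Tendsto (fun k => compFrom (Phi ρ) 0 k 0) atTop (𝓝 pe) := by
    simpa only [Hseq_eq_compFrom] using hpe
  constructor
  · intro hpe_lt
    have hq0 : ⨆ k, compFrom (Phi ρ) 0 k 0 = pe :=
      tendsto_nhds_unique (tendsto_compFrom_zero hmaps hmono 0) hH
    refine ⟨fun n => ⨆ k, compFrom (Phi ρ) n k 0, 0, iSup_compFrom_zero_mem_Icc hmaps hmono,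
      hq0.le.trans_lt hpe_lt, fun n _ => ?_⟩
    exact (apply_iSup_compFrom_zero hmaps hmono
      (fun n => continuousOn_Phi (hρ0 n) (hρ1 n)) n).le
  · rintro ⟨q, n₀, hq, hqn₀, hsub⟩
    calc pe ≤ compFrom (Phi ρ) 0 n₀ (q n₀) :=
          le_of_tendsto hH <| eventually_atTop.2 ⟨n₀, fun k hk =>
            compFrom_le_compFrom_of_subinvariant (isLeast_Icc zero_le_one) hmaps hmono hq hsub hk⟩
      _ < 1 := (mapsTo_compFrom (fun n => mapsTo_Phi_Ico (hρ0 n) (hρ1 n) (hρlt n)) 0 n₀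
          ⟨(hq n₀).1, hqn₀⟩).2
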